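/- arXiv:1610.08696 — 2 statements merged into one kernel-verified Lean document; each statement's English description precedes it below -/
import Mathlib

section
/- Let ŵ := argmin_{w∈W} (1/n)Σ_{j=1}^n ℓ(y_j, ⟨w, u_j⟩) + ρ r(w) and w̃ := argmin_{w∈W} (1/n)Σ_{j=1}^n ℓ(y_j, ⟨w, v_j⟩) + ρ r(w), where u_1,…,u_n, v_1,…,v_n ∈ ℝ^m are feature vectors satisfying ‖u_j − v_j‖_2 ≤ ε for every j ∈ [n]. Then ‖ŵ − w̃‖_2 ≤ √( 2 L_ℓ R_W ε / ρ ). -/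
open Finset RealInnerProductSpace

/-- Quadratic growth at a minimizer of a uniformly convex function. -/
lemma growth_at_min {E : Type*} [NormedAddCommGroup E] [NormedSpace ℝ E]
    {W : Set E} {F : E → ℝ} {c : ℝ}
    (hF : ∀ ⦃x⦄, x ∈ W → ∀ ⦃z⦄, z ∈ W → ∀ ⦃a b : ℝ⦄, 0 ≤ a → 0 ≤ b → a + b = 1 →
      F (a • x + b • z) ≤ a * F x + b * F z - a * b * (c * ‖x - z‖ ^ 2))
    (hWconv : Convex ℝ W)
    {w0 : E} (hw0 : w0 ∈ W) (hmin : ∀ w ∈ W, F w0 ≤ F w) :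
    ∀ w ∈ W, c * ‖w - w0‖ ^ 2 ≤ F w - F w0 := by
  intro w hw
  have key : ∀ a : ℝ, a ∈ Set.Ioo (0:ℝ) 1 →
      (1 - a) * (c * ‖w - w0‖ ^ 2) ≤ F w - F w0 := by
    rintro a ⟨ha0, ha1⟩
    have hb0 : (0:ℝ) ≤ 1 - a := by linarith
    have hzW : a • w + (1 - a) • w0 ∈ W := hWconv hw hw0 ha0.le hb0 (by ring)
    have h1 := hmin _ hzW
    have h2 := hF hw hw0 ha0.le hb0 (by ring : a + (1 - a) = 1)
    have h3 : a * ((1 - a) * (c * ‖w - w0‖ ^ 2)) ≤ a * (F w - F w0) := by nlinarith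
    exact le_of_mul_le_mul_left h3 ha0
  have hten : Filter.Tendsto (fun a : ℝ => (1 - a) * (c * ‖w - w0‖ ^ 2))
      (nhdsWithin 0 (Set.Ioi 0)) (nhds (c * ‖w - w0‖ ^ 2)) := by
    have : Filter.Tendsto (fun a : ℝ => (1 - a) * (c * ‖w - w0‖ ^ 2))
        (nhds 0) (nhds ((1 - 0) * (c * ‖w - w0‖ ^ 2))) :=
      (Filter.Tendsto.const_sub _ Filter.tendsto_id).mul_const _
    simpa using this.mono_left nhdsWithin_le_nhds
  refine le_of_tendsto hten ?_
  filter_upwards [Ioo_mem_nhdsGT_of_mem (Set.mem_Ico.2 ⟨le_refl (0:ℝ), one_pos⟩)] with a ha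
  exact key a ha

/-- stability of the regularized empirical risk minimizer under
perturbation of the feature vectors. -/
theorem regularized_erm_stability {m n : ℕ} (Y : Set ℝ)
    (W : Set (EuclideanSpace ℝ (Fin m))) (hWclosed : IsClosed W) (hWconv : Convex ℝ W)
    (RW : ℝ) (hWb : ∀ w ∈ W, ‖w‖ ≤ RW)
    (ℓ : ℝ → ℝ → ℝ) (hℓnn : ∀ y ∈ Y, ∀ s : ℝ, 0 ≤ ℓ y s)
    (Lℓ : ℝ) (hLℓ : 0 ≤ Lℓ)
    (hℓconv : ∀ y ∈ Y, ConvexOn ℝ Set.univ (ℓ y))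
    (hℓlip : ∀ y ∈ Y, LipschitzWith Lℓ.toNNReal (ℓ y))
    (r : EuclideanSpace ℝ (Fin m) → ℝ) (hr : StrongConvexOn W 1 r)
    (ρ : ℝ) (hρ : 0 < ρ)
    (y : Fin n → ℝ) (hy : ∀ j, y j ∈ Y)
    (u v : Fin n → EuclideanSpace ℝ (Fin m)) (ε : ℝ)
    (huv : ∀ j, ‖u j - v j‖ ≤ ε)
    (what wtil : EuclideanSpace ℝ (Fin m))
    (hwhatW : what ∈ W)
    (hwhat : ∀ w ∈ W,
      (1 / n : ℝ) * ∑ j, ℓ (y j) ⟪what, u j⟫ + ρ * r what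
        ≤ (1 / n : ℝ) * ∑ j, ℓ (y j) ⟪w, u j⟫ + ρ * r w)
    (hwtilW : wtil ∈ W)
    (hwtil : ∀ w ∈ W,
      (1 / n : ℝ) * ∑ j, ℓ (y j) ⟪wtil, v j⟫ + ρ * r wtil
        ≤ (1 / n : ℝ) * ∑ j, ℓ (y j) ⟪w, v j⟫ + ρ * r w) :
    ‖what - wtil‖ ≤ Real.sqrt (2 * Lℓ * RW * ε / ρ) := by
  set F : EuclideanSpace ℝ (Fin m) → ℝ :=
    fun w => (1 / n : ℝ) * ∑ j, ℓ (y j) ⟪w, u j⟫ + ρ * r w with hF_def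
  set G : EuclideanSpace ℝ (Fin m) → ℝ :=
    fun w => (1 / n : ℝ) * ∑ j, ℓ (y j) ⟪w, v j⟫ + ρ * r w with hG_def
  -- uniform convexity of the objectives
  have huc : ∀ (z : Fin n → EuclideanSpace ℝ (Fin m)),
      ∀ ⦃x⦄, x ∈ W → ∀ ⦃w⦄, w ∈ W → ∀ ⦃a b : ℝ⦄, 0 ≤ a → 0 ≤ b → a + b = 1 →
      ((1 / n : ℝ) * ∑ j, ℓ (y j) ⟪a • x + b • w, z j⟫ + ρ * r (a • x + b • w))
        ≤ a * ((1 / n : ℝ) * ∑ j, ℓ (y j) ⟪x, z j⟫ + ρ * r x)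
          + b * ((1 / n : ℝ) * ∑ j, ℓ (y j) ⟪w, z j⟫ + ρ * r w)
          - a * b * (ρ / 2 * ‖x - w‖ ^ 2) := by
    intro z x hx w hw a b ha hb hab
    have hsum : ∑ j, ℓ (y j) ⟪a • x + b • w, z j⟫
        ≤ ∑ j, (a * ℓ (y j) ⟪x, z j⟫ + b * ℓ (y j) ⟪w, z j⟫) := by
      refine Finset.sum_le_sum fun j _ => ?_
      have hinner : ⟪a • x + b • w, z j⟫ = a * ⟪x, z j⟫ + b * ⟪w, z j⟫ := by
        rw [inner_add_left, real_inner_smul_left, real_inner_smul_left]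
      rw [hinner]
      have := (hℓconv (y j) (hy j)).2 (Set.mem_univ ⟪x, z j⟫) (Set.mem_univ ⟪w, z j⟫)
        ha hb hab
      simpa [smul_eq_mul] using this
    have hn : (0:ℝ) ≤ 1 / n := by positivity
    have hsum' : (1 / n : ℝ) * ∑ j, ℓ (y j) ⟪a • x + b • w, z j⟫
        ≤ (1 / n : ℝ) * ∑ j, (a * ℓ (y j) ⟪x, z j⟫ + b * ℓ (y j) ⟪w, z j⟫) :=
      mul_le_mul_of_nonneg_left hsum hn
    have hrstr := hr.2 hx hw ha hb hab
    simp only [smul_eq_mul] at hrstr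
    have hrstr' : ρ * r (a • x + b • w)
        ≤ ρ * (a * r x + b * r w - a * b * (1 / 2 * ‖x - w‖ ^ 2)) :=
      mul_le_mul_of_nonneg_left hrstr hρ.le
    have hsplit : ∑ j, (a * ℓ (y j) ⟪x, z j⟫ + b * ℓ (y j) ⟪w, z j⟫)
        = a * ∑ j, ℓ (y j) ⟪x, z j⟫ + b * ∑ j, ℓ (y j) ⟪w, z j⟫ := by
      rw [Finset.sum_add_distrib, Finset.mul_sum, Finset.mul_sum]
    rw [hsplit] at hsum'
    nlinarith [hsum', hrstr']
  have hgrF : ρ / 2 * ‖wtil - what‖ ^ 2 ≤ F wtil - F what :=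
    growth_at_min (fun x hx z hz a b ha hb hab => huc u hx hz ha hb hab)
      hWconv hwhatW hwhat wtil hwtilW
  have hgrG : ρ / 2 * ‖what - wtil‖ ^ 2 ≤ G what - G wtil :=
    growth_at_min (fun x hx z hz a b ha hb hab => huc v hx hz ha hb hab)
      hWconv hwtilW hwtil what hwhatW
  have hnormrev : ‖wtil - what‖ = ‖what - wtil‖ := norm_sub_rev _ _
  rw [hnormrev] at hgrF
  -- combine the two growth bounds
  have hcomb : ρ * ‖what - wtil‖ ^ 2
      ≤ (1 / n : ℝ) * ∑ j, (ℓ (y j) ⟪wtil, u j⟫ - ℓ (y j) ⟪wtil, v j⟫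
          + ℓ (y j) ⟪what, v j⟫ - ℓ (y j) ⟪what, u j⟫) := by
    have : F wtil - F what + (G what - G wtil)
        = (1 / n : ℝ) * ∑ j, (ℓ (y j) ⟪wtil, u j⟫ - ℓ (y j) ⟪wtil, v j⟫
            + ℓ (y j) ⟪what, v j⟫ - ℓ (y j) ⟪what, u j⟫) := by
      have hsplit2 : (∑ j, (ℓ (y j) ⟪wtil, u j⟫ - ℓ (y j) ⟪wtil, v j⟫
            + ℓ (y j) ⟪what, v j⟫ - ℓ (y j) ⟪what, u j⟫))
          = (∑ j, ℓ (y j) ⟪wtil, u j⟫) - (∑ j, ℓ (y j) ⟪wtil, v j⟫)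
            + (∑ j, ℓ (y j) ⟪what, v j⟫) - (∑ j, ℓ (y j) ⟪what, u j⟫) := by
        rw [Finset.sum_sub_distrib, Finset.sum_add_distrib, Finset.sum_sub_distrib]
      rw [hsplit2]
      simp only [hF_def, hG_def]
      ring
    linarith [hgrF, hgrG, this]
  -- bound each summand
  have hRW : (0:ℝ) ≤ RW := le_trans (norm_nonneg what) (hWb what hwhatW)
  have hlipR : ∀ j (w : EuclideanSpace ℝ (Fin m)), w ∈ W →
      |ℓ (y j) ⟪w, u j⟫ - ℓ (y j) ⟪w, v j⟫| ≤ Lℓ * RW * ε := by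
    intro j w hw
    have h1 := (hℓlip (y j) (hy j)).dist_le_mul ⟪w, u j⟫ ⟪w, v j⟫
    rw [Real.dist_eq, Real.dist_eq, Real.coe_toNNReal Lℓ hLℓ] at h1
    have h2 : ⟪w, u j⟫ - ⟪w, v j⟫ = ⟪w, u j - v j⟫ := (inner_sub_right _ _ _).symm
    have h3 : |⟪w, u j⟫ - ⟪w, v j⟫| ≤ ‖w‖ * ‖u j - v j‖ := by
      rw [h2]; exact abs_real_inner_le_norm _ _
    have h4 : ‖w‖ * ‖u j - v j‖ ≤ RW * ε := by
      have := huv j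
      have hnn := norm_nonneg (u j - v j)
      nlinarith [hWb w hw, norm_nonneg w]
    calc |ℓ (y j) ⟪w, u j⟫ - ℓ (y j) ⟪w, v j⟫| ≤ Lℓ * |⟪w, u j⟫ - ⟪w, v j⟫| := h1
      _ ≤ Lℓ * (RW * ε) := by
          apply mul_le_mul_of_nonneg_left _ hLℓ
          exact le_trans h3 h4
      _ = Lℓ * RW * ε := by ring
  have hterm : ∀ j : Fin n, (ℓ (y j) ⟪wtil, u j⟫ - ℓ (y j) ⟪wtil, v j⟫
      + ℓ (y j) ⟪what, v j⟫ - ℓ (y j) ⟪what, u j⟫) ≤ 2 * (Lℓ * RW * ε) := by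
    intro j
    have h1 := abs_le.1 (hlipR j wtil hwtilW)
    have h2 := abs_le.1 (hlipR j what hwhatW)
    linarith [h1.2, h2.1]
  have hsumbd : ∑ j, (ℓ (y j) ⟪wtil, u j⟫ - ℓ (y j) ⟪wtil, v j⟫
      + ℓ (y j) ⟪what, v j⟫ - ℓ (y j) ⟪what, u j⟫) ≤ (n : ℝ) * (2 * (Lℓ * RW * ε)) := by
    calc _ ≤ ∑ _j : Fin n, 2 * (Lℓ * RW * ε) := Finset.sum_le_sum fun j _ => hterm j
      _ = (n : ℝ) * (2 * (Lℓ * RW * ε)) := by simp [Finset.sum_const, nsmul_eq_mul]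
  rcases Nat.eq_zero_or_pos n with hn0 | hnpos
  · subst hn0
    have : ρ * ‖what - wtil‖ ^ 2 ≤ 0 := by simpa using hcomb
    have hsq0 : ‖what - wtil‖ ^ 2 = 0 := le_antisymm (by nlinarith) (sq_nonneg _)
    have hnorm0 : ‖what - wtil‖ = 0 := sq_eq_zero_iff.mp hsq0
    rw [hnorm0]
    exact Real.sqrt_nonneg _
  · have hnpos' : (0:ℝ) < n := by exact_mod_cast hnpos
    have hfin : ρ * ‖what - wtil‖ ^ 2 ≤ 2 * Lℓ * RW * ε := by
      have h5 : (1 / n : ℝ) * ∑ j, (ℓ (y j) ⟪wtil, u j⟫ - ℓ (y j) ⟪wtil, v j⟫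
          + ℓ (y j) ⟪what, v j⟫ - ℓ (y j) ⟪what, u j⟫)
          ≤ (1 / n : ℝ) * ((n : ℝ) * (2 * (Lℓ * RW * ε))) :=
        mul_le_mul_of_nonneg_left hsumbd (by positivity)
      have h6 : (1 / n : ℝ) * ((n : ℝ) * (2 * (Lℓ * RW * ε))) = 2 * Lℓ * RW * ε := by
        field_simp
      linarith [hcomb, h5, h6.le]
    have hsq : ‖what - wtil‖ ^ 2 ≤ 2 * Lℓ * RW * ε / ρ := by
      rw [le_div_iff₀ hρ]
      linarith [hfin]
    calc ‖what - wtil‖ = Real.sqrt (‖what - wtil‖ ^ 2) :=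
          (Real.sqrt_sq (norm_nonneg _)).symm
      _ ≤ Real.sqrt (2 * Lℓ * RW * ε / ρ) := Real.sqrt_le_sqrt hsq
end

section
/- (Optimal value stability.) Let D and D̃ be dictionaries with ‖D − D̃‖_{1,2} ≤ λ, and let v_D(x) and v_{D̃}(x) denote the minimum values of the LASSO objectives for D and D̃ respectively at x ∈ ℝ^d. Then |v_D(x) − v_{D̃}(x)| ≤ (1/2)(1 + ‖x‖_2/4) ‖x‖_2³ · ‖D − D̃‖_{1,2} / λ. -/
/-! Compare both values through a common candidate `z`. If `z` does better than `z = 0` for `D`,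
then `λ‖z‖₁ ≤ ‖x‖²/2` and `‖x - Dz‖ ≤ ‖x‖`, so the residual for `D̃` grows by at most
`c = ‖(D - D̃)z‖ ≤ ‖D - D̃‖_{1,2} ‖z‖₁ ≤ ‖D - D̃‖_{1,2} ‖x‖² / (2λ)`, and the squared loss by at most
`c (‖x‖ + c/2)`; `‖D - D̃‖_{1,2} ≤ λ` gives `c ≤ ‖x‖²/2`. Otherwise `z = 0` already does as well
for `D̃`. -/

open Finset Matrix

noncomputable def norm2 {ι : Type*} [Fintype ι] (v : ι → ℝ) : ℝ :=
  Real.sqrt (∑ i, v i ^ 2)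

noncomputable def norm1 {ι : Type*} [Fintype ι] (v : ι → ℝ) : ℝ :=
  ∑ i, |v i|

noncomputable def norm0 {ι : Type*} (v : ι → ℝ) : ℕ :=
  Set.ncard {i | v i ≠ 0}

noncomputable def dot {ι : Type*} [Fintype ι] (u v : ι → ℝ) : ℝ :=
  ∑ i, u i * v i

def col {d m : ℕ} (D : Matrix (Fin d) (Fin m) ℝ) (i : Fin m) : Fin d → ℝ :=
  fun r => D r i

def IsDictionary {d m : ℕ} (D : Matrix (Fin d) (Fin m) ℝ) : Prop :=
  ∀ i, norm2 (_root_.col D i) = 1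

noncomputable def norm12 {d m : ℕ} (E : Matrix (Fin d) (Fin m) ℝ) : ℝ :=
  ⨆ i : Fin m, norm2 (_root_.col E i)

noncomputable def lassoObj {d m : ℕ} (lam : ℝ) (D : Matrix (Fin d) (Fin m) ℝ)
    (x : Fin d → ℝ) (z : Fin m → ℝ) : ℝ :=
  (1/2) * (norm2 (x - D.mulVec z))^2 + lam * norm1 z

def IsLassoMin {d m : ℕ} (lam : ℝ) (D : Matrix (Fin d) (Fin m) ℝ)
    (x : Fin d → ℝ) (a : Fin m → ℝ) : Prop :=
  ∀ z, lassoObj lam D x a ≤ lassoObj lam D x z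

def Incoherent {d m : ℕ} (mu : ℝ) (D : Matrix (Fin d) (Fin m) ℝ) : Prop :=
  ∀ i j, i ≠ j → |dot (_root_.col D i) (_root_.col D j)| ≤ mu / Real.sqrt d

noncomputable def kMargin {d m : ℕ} (lam : ℝ) (k : ℕ) (D : Matrix (Fin d) (Fin m) ℝ)
    (x : Fin d → ℝ) (a : Fin m → ℝ) : ℝ :=
  ⨆ I : {I : Finset (Fin m) // I.card = m - k},
    ⨅ j : {j : Fin m // j ∈ I.1}, (lam - |dot (_root_.col D j.1) (x - D.mulVec a)|)

lemma norm2_eq_norm_toLp {ι : Type*} [Fintype ι] (v : ι → ℝ) :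
    norm2 v = ‖WithLp.toLp 2 v‖ := by
  simp [norm2, EuclideanSpace.norm_eq, sq_abs]

lemma norm2_nonneg {ι : Type*} [Fintype ι] (v : ι → ℝ) : 0 ≤ norm2 v :=
  Real.sqrt_nonneg _

lemma norm1_nonneg {ι : Type*} [Fintype ι] (v : ι → ℝ) : 0 ≤ norm1 v :=
  Finset.sum_nonneg fun _ _ => abs_nonneg _

lemma norm2_add_le {ι : Type*} [Fintype ι] (u v : ι → ℝ) :
    norm2 (u + v) ≤ norm2 u + norm2 v := by
  simpa only [norm2_eq_norm_toLp, WithLp.toLp_add] using norm_add_le _ _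

lemma norm2_neg {ι : Type*} [Fintype ι] (v : ι → ℝ) : norm2 (-v) = norm2 v := by
  simp [norm2]

section ColumnNorm

variable {d m : ℕ}

lemma norm2_col_le_norm12 (E : Matrix (Fin d) (Fin m) ℝ) (i : Fin m) :
    norm2 (_root_.col E i) ≤ norm12 E :=
  le_ciSup (f := fun j => norm2 (_root_.col E j)) (Set.finite_range _).bddAbove i

lemma norm12_nonneg (E : Matrix (Fin d) (Fin m) ℝ) : 0 ≤ norm12 E :=
  Real.iSup_nonneg fun _ => norm2_nonneg _

lemma norm12_sub_comm (D Dt : Matrix (Fin d) (Fin m) ℝ) :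
    norm12 (D - Dt) = norm12 (Dt - D) := by
  rw [← neg_sub Dt D]
  exact congrArg iSup (funext fun i => norm2_neg (_root_.col (Dt - D) i))

lemma norm2_mulVec_le (E : Matrix (Fin d) (Fin m) ℝ) (z : Fin m → ℝ) :
    norm2 (E *ᵥ z) ≤ norm12 E * norm1 z := by
  have hcols : WithLp.toLp 2 (E *ᵥ z) = ∑ i, z i • WithLp.toLp 2 (_root_.col E i) := by
    ext r
    simp [mulVec, dotProduct, _root_.col, mul_comm]
  rw [norm2_eq_norm_toLp, hcols, norm1, Finset.mul_sum]
  refine (norm_sum_le _ _).trans (Finset.sum_le_sum fun i _ => ?_)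
  rw [norm_smul, Real.norm_eq_abs, ← norm2_eq_norm_toLp, mul_comm]
  exact mul_le_mul_of_nonneg_right (norm2_col_le_norm12 E i) (abs_nonneg _)

end ColumnNorm

section Lasso

variable {d m : ℕ} {lam : ℝ}

lemma lassoObj_nonneg (hlam : 0 ≤ lam) (D : Matrix (Fin d) (Fin m) ℝ) (x : Fin d → ℝ)
    (z : Fin m → ℝ) : 0 ≤ lassoObj lam D x z := by
  unfold lassoObj
  have := norm1_nonneg z
  positivity

lemma lassoObj_zero (D : Matrix (Fin d) (Fin m) ℝ) (x : Fin d → ℝ) :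
    lassoObj lam D x 0 = 1 / 2 * norm2 x ^ 2 := by
  simp [lassoObj, norm1]

lemma lassoObj_le_lassoObj_add (D Dt : Matrix (Fin d) (Fin m) ℝ) (x : Fin d → ℝ)
    (z : Fin m → ℝ) :
    lassoObj lam Dt x z ≤ lassoObj lam D x z
      + norm2 ((D - Dt) *ᵥ z) * (norm2 (x - D *ᵥ z) + norm2 ((D - Dt) *ᵥ z) / 2) := by
  have htri : norm2 (x - Dt *ᵥ z) ≤ norm2 (x - D *ᵥ z) + norm2 ((D - Dt) *ᵥ z) := by
    have hsplit : x - Dt *ᵥ z = (x - D *ᵥ z) + (D - Dt) *ᵥ z := by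
      rw [sub_mulVec]; abel
    exact hsplit ▸ norm2_add_le _ _
  have hsq := pow_le_pow_left₀ (norm2_nonneg _) htri 2
  unfold lassoObj
  nlinarith

lemma lassoObj_le_add_of_le_lassoObj_zero (hlam : 0 < lam) {D Dt : Matrix (Fin d) (Fin m) ℝ}
    (hclose : norm12 (D - Dt) ≤ lam) (x : Fin d → ℝ) (z : Fin m → ℝ)
    (hz : lassoObj lam D x z ≤ lassoObj lam D x 0) :
    lassoObj lam Dt x z ≤ lassoObj lam D x z
      + 1 / 2 * (1 + norm2 x / 4) * norm2 x ^ 3 * norm12 (D - Dt) / lam := by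
  set X := norm2 x
  set M := norm12 (D - Dt)
  set a := norm2 (x - D *ᵥ z)
  set c := norm2 ((D - Dt) *ᵥ z)
  have hX : 0 ≤ X := norm2_nonneg x
  have hM : 0 ≤ M := norm12_nonneg _
  have ha : 0 ≤ a := norm2_nonneg _
  have hc : 0 ≤ c := norm2_nonneg _
  have hz' : 1 / 2 * a ^ 2 + lam * norm1 z ≤ 1 / 2 * X ^ 2 :=
    lassoObj_zero (lam := lam) D x ▸ hz
  have hl1 : lam * norm1 z ≤ X ^ 2 / 2 := by nlinarith [norm1_nonneg z]
  have haX : a ≤ X := by nlinarith [mul_nonneg hlam.le (norm1_nonneg z)]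
  have hcM : c ≤ M * norm1 z := norm2_mulVec_le _ z
  have hlc : lam * c ≤ M * (X ^ 2 / 2) := by
    nlinarith [mul_le_mul_of_nonneg_left hl1 hM]
  have hcX : c ≤ X ^ 2 / 2 :=
    hcM.trans ((mul_le_mul_of_nonneg_right hclose (norm1_nonneg z)).trans hl1)
  have hgain : c * (a + c / 2) ≤ 1 / 2 * (1 + X / 4) * X ^ 3 * M / lam := by
    rw [le_div_iff₀ hlam]
    calc c * (a + c / 2) * lam = lam * c * (a + c / 2) := by ring
      _ ≤ M * (X ^ 2 / 2) * (X + X ^ 2 / 4) :=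
        mul_le_mul hlc (by linarith) (by positivity) (by positivity)
      _ = 1 / 2 * (1 + X / 4) * X ^ 3 * M := by ring
  linarith [lassoObj_le_lassoObj_add (lam := lam) D Dt x z]

end Lasso

lemma ciInf_le_ciInf_add {ι : Type*} [Nonempty ι] {f g : ι → ℝ} {B : ℝ}
    (hg : BddBelow (Set.range g)) (h : ∀ z, ∃ w, g w ≤ f z + B) :
    ⨅ w, g w ≤ (⨅ z, f z) + B := by
  rw [← sub_le_iff_le_add]
  refine le_ciInf fun z => ?_
  obtain ⟨w, hw⟩ := h z
  linarith [ciInf_le hg w]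

lemma lasso_value_le_add {d m : ℕ} {lam : ℝ} (hlam : 0 < lam) {D Dt : Matrix (Fin d) (Fin m) ℝ}
    (hclose : norm12 (D - Dt) ≤ lam) (x : Fin d → ℝ) :
    ⨅ z, lassoObj lam Dt x z
      ≤ (⨅ z, lassoObj lam D x z)
        + 1 / 2 * (1 + norm2 x / 4) * norm2 x ^ 3 * norm12 (D - Dt) / lam := by
  have hbound : 0 ≤ 1 / 2 * (1 + norm2 x / 4) * norm2 x ^ 3 * norm12 (D - Dt) / lam := by
    have := norm2_nonneg x
    have := norm12_nonneg (D - Dt)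
    positivity
  refine ciInf_le_ciInf_add ⟨0, Set.forall_mem_range.2 (lassoObj_nonneg hlam.le Dt x)⟩ fun z => ?_
  by_cases hz : lassoObj lam D x z ≤ lassoObj lam D x 0
  · exact ⟨z, lassoObj_le_add_of_le_lassoObj_zero hlam hclose x z hz⟩
  · refine ⟨0, ?_⟩
    rw [lassoObj_zero] at hz ⊢
    linarith

theorem lasso_optimal_value_stability_general {d m : ℕ} (lam : ℝ) (hlam : 0 < lam)
    (D Dt : Matrix (Fin d) (Fin m) ℝ)
    (hclose : norm12 (D - Dt) ≤ lam) (x : Fin d → ℝ) :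
    |(⨅ z : Fin m → ℝ, lassoObj lam D x z) - (⨅ z : Fin m → ℝ, lassoObj lam Dt x z)|
      ≤ (1/2) * (1 + norm2 x / 4) * (norm2 x)^3 * norm12 (D - Dt) / lam := by
  have hDt := lasso_value_le_add hlam hclose x
  have hD := lasso_value_le_add hlam ((norm12_sub_comm Dt D).trans_le hclose) x
  rw [norm12_sub_comm Dt D] at hD
  rw [abs_sub_le_iff]
  constructor <;> linarith

/-- Optimal value stability. -/
theorem lasso_optimal_value_stability {d m : ℕ} (lam : ℝ) (hlam : 0 < lam)
    (D Dt : Matrix (Fin d) (Fin m) ℝ) (hD : IsDictionary D) (hDt : IsDictionary Dt)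
    (hclose : norm12 (D - Dt) ≤ lam) (x : Fin d → ℝ) :
    |(⨅ z : Fin m → ℝ, lassoObj lam D x z) - (⨅ z : Fin m → ℝ, lassoObj lam Dt x z)|
      ≤ (1/2) * (1 + norm2 x / 4) * (norm2 x)^3 * norm12 (D - Dt) / lam :=
  lasso_optimal_value_stability_general lam hlam D Dt hclose x
end
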